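/- Let P be a Wasserstein contractive Markov kernel with invariant measure π and suppose E_1(x) ≤ c < ∞ for π-almost all x. Then for every f ∈ L₀ the unique Lipschitz solution u of Poisson's equation satisfies |u(x)| ≤ c·Λ·‖f‖_d for π-almost all x. -/

import Mathlib

open MeasureTheory ProbabilityTheory ENNReal Filter

noncomputable section

/-- `η` is a coupling of `μ` and `ν`. -/
def IsCoupling {X : Type*} [MeasurableSpace X] (η : Measure (X × X)) (μ ν : Measure X) : Prop :=
  η.map Prod.fst = μ ∧ η.map Prod.snd = ν

/-- The 1-Wasserstein distance between two measures, w.r.t. the metric of `X`. -/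
def wass {X : Type*} [MeasurableSpace X] [MetricSpace X] (μ ν : Measure X) : ℝ≥0∞ :=
  ⨅ η : {η : Measure (X × X) // IsCoupling η μ ν}, ∫⁻ p, edist p.1 p.2 ∂(η : Measure (X × X))

/-- The Kantorovich norm of a Markov kernel. -/
def tau {X : Type*} [MeasurableSpace X] [MetricSpace X] (K : Kernel X X) : ℝ≥0∞ :=
  ⨆ (x : X) (y : X) (_ : x ≠ y), wass (K x) (K y) / edist x y

/-- The `p`-eccentricity of `π` at `x₀`. -/
def ecc {X : Type*} [MeasurableSpace X] [MetricSpace X] (π : Measure X) (p : ℝ) (x₀ : X) : ℝ≥0∞ :=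
  ∫⁻ y, edist x₀ y ^ p ∂π

/-- The Lipschitz seminorm `‖f‖_d` (valued in `ℝ≥0∞`). -/
def elip {X : Type*} [MetricSpace X] (f : X → ℝ) : ℝ≥0∞ :=
  ⨆ (x : X) (y : X) (_ : x ≠ y), ENNReal.ofReal |f x - f y| / edist x y

/-- Membership in the Banach space `L₀` of centred measurable Lipschitz functions. -/
def MemL0 {X : Type*} [MeasurableSpace X] [MetricSpace X] (π : Measure X) (f : X → ℝ) : Prop :=
  Measurable f ∧ (∃ L : ℝ, ∀ x y, |f x - f y| ≤ L * dist x y) ∧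
    Integrable f π ∧ ∫ x, f x ∂π = 0

/-- Iterates of a Markov kernel. -/
def kpow {X : Type*} [MeasurableSpace X] (P : Kernel X X) : ℕ → Kernel X X
  | 0 => Kernel.id
  | n + 1 => (kpow P n) ∘ₖ P

/-- The first eccentricity `E₁(x) = ∫ d(x,y) π(dy)`. -/
def eccOne {X : Type*} [MeasurableSpace X] [MetricSpace X] (π : Measure X) (x : X) : ℝ≥0∞ :=
  ∫⁻ y, edist x y ∂π

/-!
`Pⁿ` contracts the Lipschitz seminorm by `τ(Pⁿ)`, and a centred Lipschitz function `g` satisfies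
`|g x| ≤ ‖g‖_d E₁(x)`; hence `|Pⁿ f x| ≤ ‖f‖_d E₁(x) τ(Pⁿ)`. Since `τ(Pᵐ) < 1`, the seminorms
`‖Pⁿ f‖_d` decay geometrically, so the Neumann series `u = ∑ Pⁿ f` converges to a centred
Lipschitz solution of `u - P u = f`, and `|u x| ≤ E₁(x) Λ ‖f‖_d ≤ c Λ ‖f‖_d` almost everywhere.
Two solutions differ by a centred Lipschitz function `w` with `P w = w`, and
`‖w‖_d = ‖Pᵐ w‖_d ≤ τ(Pᵐ) ‖w‖_d` forces `w = 0`.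
-/

lemma ENNReal.tsum_ne_top_of_add_le_mul {a : ℕ → ℝ≥0∞} {m : ℕ} (hm : 0 < m) {q : ℝ≥0∞}
    (hq : q < 1) (ha : ∀ n, a n ≠ ∞) (hcontr : ∀ n, a (n + m) ≤ a n * q) :
    ∑' n, a n ≠ ∞ := by
  have : NeZero m := ⟨hm.ne'⟩
  have hpow (k r : ℕ) : a (k * m + r) ≤ a r * q ^ k := by
    induction k with
    | zero => simp
    | succ k ih => calc
        a ((k + 1) * m + r) = a ((k * m + r) + m) := by ring_nf
        _ ≤ a (k * m + r) * q := hcontr _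
        _ ≤ a r * q ^ k * q := by gcongr
        _ = a r * q ^ (k + 1) := by rw [pow_succ, mul_assoc]
  have hbound : ∑' n, a n ≤ (∑ r : Fin m, a r) * (1 - q)⁻¹ := calc
    ∑' n, a n = ∑' k, ∑' r : Fin m, a (k * m + r) := by
        rw [← (Nat.divModEquiv m).symm.tsum_eq, ENNReal.tsum_prod']
        rfl
    _ ≤ ∑' k, ∑' r : Fin m, a r * q ^ k :=
        ENNReal.tsum_le_tsum fun k => ENNReal.tsum_le_tsum fun r => hpow k r
    _ = (∑ r : Fin m, a r) * (1 - q)⁻¹ := by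
        simp_rw [ENNReal.tsum_mul_right, ENNReal.tsum_mul_left, tsum_fintype,
          ENNReal.tsum_geometric]
  refine ne_top_of_le_ne_top (ENNReal.mul_ne_top ?_ ?_) hbound
  · exact ENNReal.sum_ne_top.2 fun r _ => ha r
  · exact ENNReal.inv_ne_top.2 (tsub_pos_of_lt hq).ne'

section LipschitzSeminorm

variable {X : Type*} [MetricSpace X]

lemma elip_le_iff {g : X → ℝ} {C : ℝ≥0∞} :
    elip g ≤ C ↔ ∀ x y, ENNReal.ofReal |g x - g y| ≤ C * edist x y := by
  refine ⟨fun h x y => ?_, fun h => iSup₂_le fun x y => iSup_le fun hxy => ?_⟩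
  · rcases eq_or_ne x y with rfl | hxy
    · simp
    · have hpos : edist x y ≠ 0 := (edist_pos.2 hxy).ne'
      rw [← ENNReal.div_le_iff_le_mul (Or.inl hpos) (Or.inl (edist_ne_top x y))]
      exact le_trans (le_iSup₂_of_le x y
        (le_iSup (fun _ : x ≠ y => ENNReal.ofReal |g x - g y| / edist x y) hxy)) h
  · exact ENNReal.div_le_of_le_mul (h x y)

lemma ofReal_abs_sub_le_elip_mul (g : X → ℝ) (x y : X) :
    ENNReal.ofReal |g x - g y| ≤ elip g * edist x y :=
  elip_le_iff.1 le_rfl x y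

lemma elip_le_ofReal_of_abs_sub_le {g : X → ℝ} {L : ℝ}
    (h : ∀ x y, |g x - g y| ≤ L * dist x y) : elip g ≤ ENNReal.ofReal L :=
  elip_le_iff.2 fun x y => by
    rw [edist_dist, ← ENNReal.ofReal_mul' dist_nonneg]
    exact ENNReal.ofReal_le_ofReal (h x y)

lemma abs_sub_le_toReal_elip_mul {g : X → ℝ} (hg : elip g ≠ ∞) (x y : X) :
    |g x - g y| ≤ (elip g).toReal * dist x y := by
  have h := ofReal_abs_sub_le_elip_mul g x y
  rwa [edist_dist, ← ENNReal.ofReal_toReal hg, ← ENNReal.ofReal_mul ENNReal.toReal_nonneg,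
    ENNReal.ofReal_le_ofReal_iff (by positivity)] at h

lemma elip_sub_le (g h : X → ℝ) : elip (g - h) ≤ elip g + elip h :=
  elip_le_iff.2 fun x y => calc
    ENNReal.ofReal |(g - h) x - (g - h) y|
        ≤ ENNReal.ofReal (|g x - g y| + |h x - h y|) := by
          refine ENNReal.ofReal_le_ofReal ?_
          simpa only [Pi.sub_apply, sub_sub_sub_comm] using abs_sub (g x - g y) (h x - h y)
    _ ≤ elip g * edist x y + elip h * edist x y := by
          rw [ENNReal.ofReal_add (abs_nonneg _) (abs_nonneg _)]
          exact add_le_add (ofReal_abs_sub_le_elip_mul g x y) (ofReal_abs_sub_le_elip_mul h x y)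
    _ = (elip g + elip h) * edist x y := (add_mul _ _ _).symm

lemma elip_tsum_le {g : ℕ → X → ℝ} (hg : ∀ x, Summable fun n => g n x) :
    elip (fun x => ∑' n, g n x) ≤ ∑' n, elip (g n) :=
  elip_le_iff.2 fun x y => calc
    ENNReal.ofReal |∑' n, g n x - ∑' n, g n y| = ‖∑' n, (g n x - g n y)‖ₑ := by
          rw [Real.enorm_eq_ofReal_abs, (hg x).tsum_sub (hg y)]
    _ ≤ ∑' n, ‖g n x - g n y‖ₑ := enorm_tsum_le_tsum_enorm
    _ ≤ ∑' n, elip (g n) * edist x y := ENNReal.tsum_le_tsum fun n => by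
          rw [Real.enorm_eq_ofReal_abs]; exact ofReal_abs_sub_le_elip_mul _ x y
    _ = (∑' n, elip (g n)) * edist x y := ENNReal.tsum_mul_right

end LipschitzSeminorm

section Eccentricity

variable {X : Type*} [MeasurableSpace X] [MetricSpace X]

lemma eccOne_le_add_edist (μ : Measure X) [IsProbabilityMeasure μ] (x y : X) :
    eccOne μ x ≤ eccOne μ y + edist x y := calc
  eccOne μ x ≤ ∫⁻ z, (edist y z + edist x y) ∂μ :=
        lintegral_mono fun z => (edist_triangle x y z).trans_eq (add_comm _ _)
  _ = eccOne μ y + edist x y := by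
        rw [lintegral_add_right _ measurable_const, lintegral_const, measure_univ, mul_one]
        rfl

lemma eccOne_ne_top_of_ne_top (μ : Measure X) [IsProbabilityMeasure μ] {y : X}
    (hy : eccOne μ y ≠ ∞) (x : X) : eccOne μ x ≠ ∞ :=
  ne_top_of_le_ne_top (ENNReal.add_ne_top.2 ⟨hy, edist_ne_top x y⟩) (eccOne_le_add_edist μ x y)

lemma lintegral_eccOne_le (π μ : Measure X) [IsProbabilityMeasure π] [IsProbabilityMeasure μ]
    (x₀ : X) : ∫⁻ x, eccOne π x ∂μ ≤ eccOne π x₀ + eccOne μ x₀ := calc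
  ∫⁻ x, eccOne π x ∂μ ≤ ∫⁻ x, (eccOne π x₀ + edist x₀ x) ∂μ :=
        lintegral_mono fun x => (eccOne_le_add_edist π x x₀).trans_eq (by rw [edist_comm])
  _ = eccOne π x₀ + eccOne μ x₀ := by
        rw [lintegral_add_left measurable_const, lintegral_const, measure_univ, mul_one]
        rfl

variable [SecondCountableTopology X] [BorelSpace X]

lemma measurable_eccOne (μ : Measure X) [SFinite μ] : Measurable (eccOne μ) :=
  Measurable.lintegral_prod_right measurable_edist

end Eccentricity

section Wasserstein

variable {X : Type*} [MeasurableSpace X]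

lemma isCoupling_prod (μ ν : Measure X) [IsProbabilityMeasure μ] [IsProbabilityMeasure ν] :
    IsCoupling (μ.prod ν) μ ν :=
  ⟨by rw [Measure.map_fst_prod, measure_univ, one_smul],
    by rw [Measure.map_snd_prod, measure_univ, one_smul]⟩

lemma isCoupling_map_diag (μ : Measure X) : IsCoupling (μ.map fun x => (x, x)) μ μ := by
  have hdiag : Measurable fun x : X => (x, x) := measurable_id.prodMk measurable_id
  exact ⟨by rw [Measure.map_map measurable_fst hdiag]; exact Measure.map_id',
    by rw [Measure.map_map measurable_snd hdiag]; exact Measure.map_id'⟩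

variable [MetricSpace X]

lemma wass_le_lintegral {μ ν : Measure X} {η : Measure (X × X)} (h : IsCoupling η μ ν) :
    wass μ ν ≤ ∫⁻ p, edist p.1 p.2 ∂η :=
  iInf_le (fun η : {η : Measure (X × X) // IsCoupling η μ ν} =>
    ∫⁻ p, edist p.1 p.2 ∂(η : Measure (X × X))) ⟨η, h⟩

lemma le_add_mul_wass {μ ν : Measure X} [IsProbabilityMeasure μ] [IsProbabilityMeasure ν]
    {A B C : ℝ≥0∞} (hC : C ≠ ∞)
    (h : ∀ η, IsCoupling η μ ν → A ≤ B + C * ∫⁻ p, edist p.1 p.2 ∂η) :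
    A ≤ B + C * wass μ ν := by
  rcases eq_or_ne C 0 with rfl | hC0
  · simpa using h _ (isCoupling_prod μ ν)
  · rw [wass, ENNReal.mul_iInf_of_ne hC0 hC, ENNReal.add_iInf]
    exact le_iInf fun η => h η.1 η.2

variable [SecondCountableTopology X] [BorelSpace X]

lemma wass_self (μ : Measure X) : wass μ μ = 0 := by
  refine le_antisymm ((wass_le_lintegral (isCoupling_map_diag μ)).trans_eq ?_) zero_le
  rw [lintegral_map measurable_edist (by fun_prop : Measurable fun x : X => (x, x))]
  simp

lemma lintegral_le_add_mul_wass {μ ν : Measure X} [IsProbabilityMeasure μ]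
    [IsProbabilityMeasure ν] {g : X → ℝ≥0∞} (hg : Measurable g) {C : ℝ≥0∞} (hC : C ≠ ∞)
    (hlip : ∀ a b, g a ≤ g b + C * edist a b) :
    ∫⁻ x, g x ∂μ ≤ ∫⁻ x, g x ∂ν + C * wass μ ν := by
  refine le_add_mul_wass hC fun η ⟨h₁, h₂⟩ => ?_
  rw [← h₁, ← h₂, lintegral_map hg measurable_fst, lintegral_map hg measurable_snd,
    ← lintegral_const_mul _ measurable_edist,
    ← lintegral_add_left (by fun_prop : Measurable fun p : X × X => g p.2)]
  exact lintegral_mono fun p => hlip p.1 p.2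

lemma ofReal_abs_integral_sub_le_elip_mul_wass {μ ν : Measure X} [IsProbabilityMeasure μ]
    [IsProbabilityMeasure ν] {g : X → ℝ} (hg : Measurable g) (hgL : elip g ≠ ∞)
    (hμ : Integrable g μ) (hν : Integrable g ν) :
    ENNReal.ofReal |∫ x, g x ∂μ - ∫ x, g x ∂ν| ≤ elip g * wass μ ν := by
  simpa using le_add_mul_wass (B := 0) hgL fun η ⟨h₁, h₂⟩ => by
    have hint₁ : Integrable (fun p : X × X => g p.1) η :=
      (integrable_map_measure hg.aestronglyMeasurable measurable_fst.aemeasurable).1 (h₁ ▸ hμ)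
    have hint₂ : Integrable (fun p : X × X => g p.2) η :=
      (integrable_map_measure hg.aestronglyMeasurable measurable_snd.aemeasurable).1 (h₂ ▸ hν)
    rw [← h₁, ← h₂, integral_map measurable_fst.aemeasurable hg.aestronglyMeasurable,
      integral_map measurable_snd.aemeasurable hg.aestronglyMeasurable,
      ← integral_sub hint₁ hint₂, ← Real.enorm_eq_ofReal_abs, zero_add,
      ← lintegral_const_mul _ measurable_edist]
    refine (enorm_integral_le_lintegral_enorm _).trans (lintegral_mono fun p => ?_)
    rw [Real.enorm_eq_ofReal_abs]
    exact ofReal_abs_sub_le_elip_mul g p.1 p.2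

lemma wass_le_tau_mul_edist (K : Kernel X X) (x y : X) :
    wass (K x) (K y) ≤ tau K * edist x y := by
  rcases eq_or_ne x y with rfl | hxy
  · simp [wass_self]
  · have hpos : edist x y ≠ 0 := (edist_pos.2 hxy).ne'
    rw [← ENNReal.div_le_iff_le_mul (Or.inl hpos) (Or.inl (edist_ne_top x y))]
    exact le_iSup₂_of_le x y (le_iSup (fun _ : x ≠ y => wass (K x) (K y) / edist x y) hxy)

lemma lintegral_kernel_le_add_mul {K : Kernel X X} [IsMarkovKernel K] {g : X → ℝ≥0∞}
    (hg : Measurable g) {C : ℝ≥0∞} (hC : C ≠ ∞) (hlip : ∀ a b, g a ≤ g b + C * edist a b)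
    (x y : X) : ∫⁻ z, g z ∂(K x) ≤ ∫⁻ z, g z ∂(K y) + C * tau K * edist x y := by
  rw [mul_assoc]
  refine (lintegral_le_add_mul_wass (μ := K x) (ν := K y) hg hC hlip).trans ?_
  gcongr
  exact wass_le_tau_mul_edist K x y

end Wasserstein

section KernelPow

variable {X : Type*} [MeasurableSpace X]

instance isMarkovKernel_kpow (P : Kernel X X) [IsMarkovKernel P] (n : ℕ) :
    IsMarkovKernel (kpow P n) := by
  induction n with
  | zero => exact Kernel.isMarkovKernel_deterministic measurable_id
  | succ n ih => exact Kernel.IsMarkovKernel.comp (kpow P n) P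

lemma kpow_zero_apply (P : Kernel X X) (x : X) : kpow P 0 x = Measure.dirac x :=
  Kernel.id_apply x

lemma kpow_one (P : Kernel X X) : kpow P 1 = P :=
  Kernel.id_comp P

lemma kpow_add (P : Kernel X X) (a b : ℕ) : kpow P (a + b) = kpow P a ∘ₖ kpow P b := by
  induction b with
  | zero => exact (Kernel.comp_id _).symm
  | succ b ih => rw [← add_assoc, kpow, ih, Kernel.comp_assoc]; rfl

variable [MetricSpace X] [BorelSpace X]

lemma eccOne_kpow_succ_apply (P : Kernel X X) (n : ℕ) (x x₀ : X) :
    eccOne (kpow P (n + 1) x) x₀ = ∫⁻ z, eccOne (kpow P n z) x₀ ∂(P x) :=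
  Kernel.lintegral_comp _ _ _ (by fun_prop)

lemma measurable_eccOne_kpow (P : Kernel X X) (n : ℕ) (x₀ : X) :
    Measurable fun x => eccOne (kpow P n x) x₀ :=
  Measurable.lintegral_kernel (by fun_prop)

lemma lintegral_eccOne_kpow {P : Kernel X X} {π : Measure X} (hinv : π.bind P = π) (n : ℕ)
    (x₀ : X) : ∫⁻ x, eccOne (kpow P n x) x₀ ∂π = eccOne π x₀ := by
  induction n with
  | zero => simp only [eccOne, kpow_zero_apply, lintegral_dirac]
  | succ n ih =>
    simp_rw [eccOne_kpow_succ_apply]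
    rw [← Measure.lintegral_bind P.measurable.aemeasurable
      (measurable_eccOne_kpow P n x₀).aemeasurable, hinv, ih]

variable [SecondCountableTopology X] {P : Kernel X X} [IsMarkovKernel P]

lemma eccOne_kpow_le_add (htau : tau P ≠ ∞) (n : ℕ) (x₀ x y : X) :
    eccOne (kpow P n x) x₀ ≤ eccOne (kpow P n y) x₀ + tau P ^ n * edist x y := by
  induction n generalizing x y with
  | zero =>
    simp only [eccOne, kpow_zero_apply, lintegral_dirac, pow_zero, one_mul]
    exact (edist_triangle x₀ y x).trans_eq (by rw [edist_comm y x])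
  | succ n ih =>
    rw [eccOne_kpow_succ_apply, eccOne_kpow_succ_apply, pow_succ]
    exact lintegral_kernel_le_add_mul (measurable_eccOne_kpow P n x₀)
      (ENNReal.pow_ne_top htau) ih x y

/-- Invariance makes the first moments of `Pⁿ x` finite on average, and `τ(P) < ∞` spreads
finiteness from one point to all. -/
lemma eccOne_kpow_ne_top {π : Measure X} [IsProbabilityMeasure π] (hinv : π.bind P = π)
    (htau : tau P ≠ ∞) {x₀ : X} (hπ : eccOne π x₀ ≠ ∞) (n : ℕ) (x : X) :
    eccOne (kpow P n x) x₀ ≠ ∞ := by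
  obtain ⟨z, hz⟩ := (ae_lt_top (measurable_eccOne_kpow P n x₀)
    ((lintegral_eccOne_kpow hinv n x₀).trans_ne hπ)).exists
  exact ne_top_of_le_ne_top (ENNReal.add_ne_top.2 ⟨hz.ne,
    ENNReal.mul_ne_top (ENNReal.pow_ne_top htau) (edist_ne_top x z)⟩)
    (eccOne_kpow_le_add htau n x₀ x z)

end KernelPow

/-- `markovOp (kpow P n) g` is `Pⁿ g`. -/
def markovOp {X : Type*} [MeasurableSpace X] (K : Kernel X X) (g : X → ℝ) (x : X) : ℝ :=
  ∫ y, g y ∂(K x)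

section MarkovOp

variable {X : Type*} [MeasurableSpace X]

lemma markovOp_kpow_zero [MeasurableSingletonClass X] (P : Kernel X X) (g : X → ℝ) :
    markovOp (kpow P 0) g = g :=
  funext fun x => by rw [markovOp, kpow_zero_apply, integral_dirac]

lemma measurable_markovOp (K : Kernel X X) {g : X → ℝ} (hg : Measurable g) :
    Measurable (markovOp K g) :=
  hg.stronglyMeasurable.integral_kernel.measurable

lemma markovOp_comp {κ η : Kernel X X} {g : X → ℝ} (hg : ∀ x, Integrable g ((η ∘ₖ κ) x)) :
    markovOp (η ∘ₖ κ) g = markovOp κ (markovOp η g) :=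
  funext fun x => Kernel.integral_comp (hg x)

lemma integral_markovOp {K : Kernel X X} {π : Measure X} (hinv : π.bind K = π) {g : X → ℝ}
    (hg : Integrable g π) : ∫ x, markovOp K g x ∂π = ∫ x, g x ∂π := by
  have hg' := hg
  rw [← hinv, Measure.comp_eq_comp_const_apply] at hg'
  calc ∫ x, markovOp K g x ∂π = ∫ x, g x ∂((K ∘ₖ Kernel.const Unit π) ()) := by
        rw [Kernel.integral_comp hg', Kernel.const_apply]; rfl
    _ = ∫ x, g x ∂π := by rw [← Measure.comp_eq_comp_const_apply, hinv]

variable [MetricSpace X] [BorelSpace X]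

lemma integrable_of_elip_ne_top {μ : Measure X} [IsFiniteMeasure μ] {g : X → ℝ}
    (hg : Measurable g) (hgL : elip g ≠ ∞) {x₀ : X} (hμ : eccOne μ x₀ ≠ ∞) :
    Integrable g μ := by
  have hbound : ∀ y, ‖g y‖ₑ ≤ ‖g x₀‖ₑ + elip g * edist x₀ y := fun y => calc
    ‖g y‖ₑ ≤ ‖g x₀‖ₑ + ‖g y - g x₀‖ₑ := by simpa using enorm_add_le (g x₀) (g y - g x₀)
    _ ≤ ‖g x₀‖ₑ + elip g * edist x₀ y := by
        rw [Real.enorm_eq_ofReal_abs (g y - g x₀), edist_comm]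
        gcongr
        exact ofReal_abs_sub_le_elip_mul g y x₀
  refine ⟨hg.aestronglyMeasurable, (lintegral_mono hbound).trans_lt ?_⟩
  rw [lintegral_add_left measurable_const, lintegral_const,
    lintegral_const_mul _ (by fun_prop)]
  exact ENNReal.add_lt_top.2 ⟨ENNReal.mul_lt_top enorm_lt_top (measure_lt_top μ _),
    ENNReal.mul_lt_top hgL.lt_top hμ.lt_top⟩

lemma ofReal_abs_le_elip_mul_eccOne {π : Measure X} [IsProbabilityMeasure π] {g : X → ℝ}
    (hg : Integrable g π) (hg₀ : ∫ y, g y ∂π = 0) (x : X) :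
    ENNReal.ofReal |g x| ≤ elip g * eccOne π x := by
  have hx : g x = ∫ y, (g x - g y) ∂π := by
    rw [integral_sub (integrable_const _) hg, hg₀]
    simp
  rw [hx, ← Real.enorm_eq_ofReal_abs, eccOne, ← lintegral_const_mul _ (by fun_prop)]
  refine (enorm_integral_le_lintegral_enorm _).trans (lintegral_mono fun y => ?_)
  rw [Real.enorm_eq_ofReal_abs]
  exact ofReal_abs_sub_le_elip_mul g x y

lemma elip_markovOp_le [SecondCountableTopology X] {K : Kernel X X} [IsMarkovKernel K]
    {g : X → ℝ} (hg : Measurable g) (hgL : elip g ≠ ∞) {x₀ : X}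
    (hK : ∀ x, eccOne (K x) x₀ ≠ ∞) : elip (markovOp K g) ≤ elip g * tau K :=
  elip_le_iff.2 fun x y => by
    rw [mul_assoc]
    exact (ofReal_abs_integral_sub_le_elip_mul_wass hg hgL (integrable_of_elip_ne_top hg hgL
      (hK x)) (integrable_of_elip_ne_top hg hgL (hK y))).trans
      (by gcongr; exact wass_le_tau_mul_edist K x y)

end MarkovOp

section Iterates

variable {X : Type*} [MeasurableSpace X] [MetricSpace X] [BorelSpace X] {P : Kernel X X}
  [IsMarkovKernel P] {x₀ : X} {g : X → ℝ}

lemma markovOp_kpow_add (hmom : ∀ n x, eccOne (kpow P n x) x₀ ≠ ∞) (hg : Measurable g)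
    (hgL : elip g ≠ ∞) (a b : ℕ) :
    markovOp (kpow P (a + b)) g = markovOp (kpow P b) (markovOp (kpow P a) g) := by
  rw [kpow_add]
  exact markovOp_comp fun x => integrable_of_elip_ne_top hg hgL (kpow_add P a b ▸ hmom _ x)

lemma markovOp_kpow_succ (hmom : ∀ n x, eccOne (kpow P n x) x₀ ≠ ∞) (hg : Measurable g)
    (hgL : elip g ≠ ∞) (n : ℕ) :
    markovOp (kpow P (n + 1)) g = markovOp P (markovOp (kpow P n) g) := by
  rw [markovOp_kpow_add hmom hg hgL, kpow_one]

variable [SecondCountableTopology X]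

lemma elip_markovOp_kpow_ne_top (hmom : ∀ n x, eccOne (kpow P n x) x₀ ≠ ∞)
    (htau : tau P ≠ ∞) (hg : Measurable g) (hgL : elip g ≠ ∞) (n : ℕ) :
    elip (markovOp (kpow P n) g) ≠ ∞ := by
  induction n with
  | zero => rwa [markovOp_kpow_zero]
  | succ n ih =>
    rw [markovOp_kpow_succ hmom hg hgL]
    refine ne_top_of_le_ne_top (ENNReal.mul_ne_top ih htau)
      (elip_markovOp_le (x₀ := x₀) (measurable_markovOp _ hg) ih fun x => ?_)
    simpa only [kpow_one] using hmom 1 x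

lemma elip_markovOp_kpow_add_le (hmom : ∀ n x, eccOne (kpow P n x) x₀ ≠ ∞)
    (htau : tau P ≠ ∞) (hg : Measurable g) (hgL : elip g ≠ ∞) (a b : ℕ) :
    elip (markovOp (kpow P (a + b)) g) ≤ elip (markovOp (kpow P a) g) * tau (kpow P b) := by
  rw [markovOp_kpow_add hmom hg hgL]
  exact elip_markovOp_le (measurable_markovOp _ hg)
    (elip_markovOp_kpow_ne_top hmom htau hg hgL a) (hmom b)

lemma integral_markovOp_kpow {π : Measure X} [IsProbabilityMeasure π] (hinv : π.bind P = π)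
    (hπ : eccOne π x₀ ≠ ∞) (hmom : ∀ n x, eccOne (kpow P n x) x₀ ≠ ∞) (htau : tau P ≠ ∞)
    (hg : Measurable g) (hgL : elip g ≠ ∞) (n : ℕ) :
    ∫ x, markovOp (kpow P n) g x ∂π = ∫ x, g x ∂π := by
  induction n with
  | zero => rw [markovOp_kpow_zero]
  | succ n ih =>
    rw [markovOp_kpow_succ hmom hg hgL, integral_markovOp hinv
      (integrable_of_elip_ne_top (measurable_markovOp _ hg)
        (elip_markovOp_kpow_ne_top hmom htau hg hgL n) hπ), ih]

end Iterates

lemma memL0_iff {X : Type*} [MeasurableSpace X] [MetricSpace X] {π : Measure X} {f : X → ℝ} :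
    MemL0 π f ↔ Measurable f ∧ elip f ≠ ∞ ∧ Integrable f π ∧ ∫ x, f x ∂π = 0 := by
  refine and_congr_right fun _ => and_congr_left fun _ => ⟨fun ⟨L, hL⟩ => ?_, fun h => ?_⟩
  · exact ne_top_of_le_ne_top ENNReal.ofReal_ne_top (elip_le_ofReal_of_abs_sub_le hL)
  · exact ⟨_, abs_sub_le_toReal_elip_mul h⟩

lemma MemL0.sub {X : Type*} [MeasurableSpace X] [MetricSpace X] {π : Measure X} {u v : X → ℝ}
    (hu : MemL0 π u) (hv : MemL0 π v) : MemL0 π (u - v) := by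
  obtain ⟨hum, huL, hui, hu₀⟩ := memL0_iff.1 hu
  obtain ⟨hvm, hvL, hvi, hv₀⟩ := memL0_iff.1 hv
  refine memL0_iff.2 ⟨hum.sub hvm, ne_top_of_le_ne_top (ENNReal.add_ne_top.2 ⟨huL, hvL⟩)
    (elip_sub_le u v), hui.sub hvi, ?_⟩
  simp only [Pi.sub_apply, integral_sub hui hvi, hu₀, hv₀, sub_zero]

def neumannSeries {X : Type*} [MeasurableSpace X] (P : Kernel X X) (f : X → ℝ) (x : X) : ℝ :=
  ∑' n, markovOp (kpow P n) f x

section Poisson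

variable {X : Type*} [MeasurableSpace X] [MetricSpace X] [SecondCountableTopology X]
  [BorelSpace X] {π : Measure X} [IsProbabilityMeasure π] {P : Kernel X X} [IsMarkovKernel P]
  {x₀ : X} {f : X → ℝ}

lemma enorm_markovOp_kpow_le (hinv : π.bind P = π) (htau : tau P ≠ ∞) (hπ : eccOne π x₀ ≠ ∞)
    (hf : MemL0 π f) (n : ℕ) (x : X) :
    ‖markovOp (kpow P n) f x‖ₑ ≤ elip (markovOp (kpow P n) f) * eccOne π x := by
  obtain ⟨hfm, hfL, -, hf₀⟩ := memL0_iff.1 hf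
  have hmom := eccOne_kpow_ne_top hinv htau hπ
  rw [Real.enorm_eq_ofReal_abs]
  exact ofReal_abs_le_elip_mul_eccOne (integrable_of_elip_ne_top (measurable_markovOp _ hfm)
    (elip_markovOp_kpow_ne_top hmom htau hfm hfL n) hπ)
    ((integral_markovOp_kpow hinv hπ hmom htau hfm hfL n).trans hf₀) x

lemma ofReal_abs_neumannSeries_le (hinv : π.bind P = π) (htau : tau P ≠ ∞)
    (hπ : eccOne π x₀ ≠ ∞) (hf : MemL0 π f) (x : X) :
    ENNReal.ofReal |neumannSeries P f x| ≤ eccOne π x * (∑' n, tau (kpow P n)) * elip f := by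
  obtain ⟨hfm, hfL, -⟩ := memL0_iff.1 hf
  have hmom := eccOne_kpow_ne_top hinv htau hπ
  rw [← Real.enorm_eq_ofReal_abs, mul_comm (eccOne π x), mul_right_comm,
    ← ENNReal.tsum_mul_right, ← ENNReal.tsum_mul_right]
  refine enorm_tsum_le_tsum_enorm.trans (ENNReal.tsum_le_tsum fun n => ?_)
  refine (enorm_markovOp_kpow_le hinv htau hπ hf n x).trans ?_
  gcongr
  simpa [markovOp_kpow_zero, mul_comm] using
    elip_markovOp_kpow_add_le hmom htau hfm hfL 0 n

lemma tsum_elip_markovOp_kpow_ne_top (hinv : π.bind P = π) (htau : tau P ≠ ∞)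
    (hπ : eccOne π x₀ ≠ ∞) {m : ℕ} (hm : 0 < m) (hcontr : tau (kpow P m) < 1)
    (hf : MemL0 π f) : ∑' n, elip (markovOp (kpow P n) f) ≠ ∞ := by
  obtain ⟨hfm, hfL, -⟩ := memL0_iff.1 hf
  have hmom := eccOne_kpow_ne_top hinv htau hπ
  exact ENNReal.tsum_ne_top_of_add_le_mul hm hcontr
    (elip_markovOp_kpow_ne_top hmom htau hfm hfL)
    (elip_markovOp_kpow_add_le hmom htau hfm hfL · m)

lemma summable_markovOp_kpow (hinv : π.bind P = π) (htau : tau P ≠ ∞) (hπ : eccOne π x₀ ≠ ∞)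
    (hf : MemL0 π f) (hsum : ∑' n, elip (markovOp (kpow P n) f) ≠ ∞) (x : X) :
    Summable fun n => markovOp (kpow P n) f x := by
  refine Summable.of_norm (tsum_enorm_ne_top_iff_summable_norm.1 (ne_top_of_le_ne_top ?_
    (ENNReal.tsum_le_tsum (enorm_markovOp_kpow_le hinv htau hπ hf · x))))
  rw [ENNReal.tsum_mul_right]
  exact ENNReal.mul_ne_top hsum (eccOne_ne_top_of_ne_top π hπ x)

lemma integral_neumannSeries (hinv : π.bind P = π) (htau : tau P ≠ ∞) (hπ : eccOne π x₀ ≠ ∞)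
    (hf : MemL0 π f) (hsum : ∑' n, elip (markovOp (kpow P n) f) ≠ ∞) (μ : Measure X)
    [IsProbabilityMeasure μ] (hμ : eccOne μ x₀ ≠ ∞) :
    ∫ x, neumannSeries P f x ∂μ = ∑' n, ∫ x, markovOp (kpow P n) f x ∂μ := by
  refine integral_tsum (fun n => (measurable_markovOp _ hf.1).aestronglyMeasurable)
    (ne_top_of_le_ne_top ?_ (ENNReal.tsum_le_tsum fun n => lintegral_mono
      (enorm_markovOp_kpow_le hinv htau hπ hf n)))
  simp_rw [lintegral_const_mul _ (measurable_eccOne π), ENNReal.tsum_mul_right]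
  exact ENNReal.mul_ne_top hsum (ne_top_of_le_ne_top (ENNReal.add_ne_top.2 ⟨hπ, hμ⟩)
    (lintegral_eccOne_le π μ x₀))

lemma memL0_neumannSeries (hinv : π.bind P = π) (htau : tau P ≠ ∞) (hπ : eccOne π x₀ ≠ ∞)
    (hf : MemL0 π f) (hsum : ∑' n, elip (markovOp (kpow P n) f) ≠ ∞) :
    MemL0 π (neumannSeries P f) := by
  obtain ⟨hfm, hfL, -, hf₀⟩ := memL0_iff.1 hf
  have hmom := eccOne_kpow_ne_top hinv htau hπ
  have hsummable := summable_markovOp_kpow hinv htau hπ hf hsum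
  have hmeas : Measurable (neumannSeries P f) :=
    measurable_of_tendsto_metrizable
      (fun N => Finset.measurable_sum _ fun n _ => measurable_markovOp _ hfm)
      (tendsto_pi_nhds.2 fun x => (hsummable x).hasSum.tendsto_sum_nat)
  have hL : elip (neumannSeries P f) ≠ ∞ := ne_top_of_le_ne_top hsum (elip_tsum_le hsummable)
  refine memL0_iff.2 ⟨hmeas, hL, integrable_of_elip_ne_top hmeas hL hπ, ?_⟩
  simp [integral_neumannSeries hinv htau hπ hf hsum π hπ,
    integral_markovOp_kpow hinv hπ hmom htau hfm hfL, hf₀]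

lemma neumannSeries_sub_markovOp (hinv : π.bind P = π) (htau : tau P ≠ ∞)
    (hπ : eccOne π x₀ ≠ ∞) (hf : MemL0 π f) (hsum : ∑' n, elip (markovOp (kpow P n) f) ≠ ∞)
    (x : X) : neumannSeries P f x - markovOp P (neumannSeries P f) x = f x := by
  obtain ⟨hfm, hfL, -⟩ := memL0_iff.1 hf
  have hmom := eccOne_kpow_ne_top hinv htau hπ
  have hPx : eccOne (P x) x₀ ≠ ∞ := by simpa only [kpow_one] using hmom 1 x
  rw [markovOp, integral_neumannSeries hinv htau hπ hf hsum (P x) hPx, neumannSeries,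
    (summable_markovOp_kpow hinv htau hπ hf hsum x).tsum_eq_zero_add, markovOp_kpow_zero]
  simp_rw [markovOp_kpow_succ hmom hfm hfL]
  exact add_sub_cancel_right _ _

/-- `Pᵐ` fixes `w` but contracts its Lipschitz seminorm by `τ(Pᵐ) < 1`. -/
lemma eq_zero_of_markovOp_eq_self (hinv : π.bind P = π) (htau : tau P ≠ ∞)
    (hπ : eccOne π x₀ ≠ ∞) {m : ℕ} (hcontr : tau (kpow P m) < 1) {w : X → ℝ}
    (hw : MemL0 π w) (hharm : markovOp P w = w) : w = 0 := by
  obtain ⟨hwm, hwL, hwi, hw₀⟩ := memL0_iff.1 hw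
  have hmom := eccOne_kpow_ne_top hinv htau hπ
  have hfix (n : ℕ) : markovOp (kpow P n) w = w := by
    induction n with
    | zero => exact markovOp_kpow_zero P w
    | succ n ih => rw [markovOp_kpow_succ hmom hwm hwL, ih, hharm]
  have hcontract : elip w ≤ elip w * tau (kpow P m) := by
    simpa only [zero_add, hfix] using elip_markovOp_kpow_add_le hmom htau hwm hwL 0 m
  have helip : elip w = 0 := by
    by_contra h0
    exact (hcontract.trans_lt (by simpa using ENNReal.mul_lt_mul_right h0 hwL hcontr)).false
  funext x
  simpa [helip] using ofReal_abs_le_elip_mul_eccOne hwi hw₀ x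

lemma eq_neumannSeries_of_sub_markovOp (hinv : π.bind P = π) (htau : tau P ≠ ∞)
    (hπ : eccOne π x₀ ≠ ∞) {m : ℕ} (hcontr : tau (kpow P m) < 1) (hf : MemL0 π f)
    (hsum : ∑' n, elip (markovOp (kpow P n) f) ≠ ∞) {v : X → ℝ} (hv : MemL0 π v)
    (hveq : ∀ x, v x - markovOp P v x = f x) : v = neumannSeries P f := by
  have hu := memL0_neumannSeries hinv htau hπ hf hsum
  refine sub_eq_zero.1 (eq_zero_of_markovOp_eq_self hinv htau hπ hcontr (hv.sub hu) ?_)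
  funext x
  have hPx : eccOne (P x) x₀ ≠ ∞ := by
    simpa only [kpow_one] using eccOne_kpow_ne_top hinv htau hπ 1 x
  have hint {g : X → ℝ} (hg : MemL0 π g) : Integrable g (P x) :=
    integrable_of_elip_ne_top hg.1 (memL0_iff.1 hg).2.1 hPx
  have hv' := hveq x
  have hu' := neumannSeries_sub_markovOp hinv htau hπ hf hsum x
  rw [markovOp] at hv' hu' ⊢
  rw [Pi.sub_apply, integral_sub' (hint hv) (hint hu)]
  linarith

end Poisson

theorem poisson_solution_Linfty_bound_general {X : Type*} [MeasurableSpace X] [MetricSpace X]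
    [PolishSpace X] [BorelSpace X]
    (π : Measure X) [IsProbabilityMeasure π]
    (P : Kernel X X) [IsMarkovKernel P] (hinv : π.bind P = π)
    (htau : tau P < ∞) (m : ℕ) (hm : 0 < m) (hcontr : tau (kpow P m) < 1)
    (c : ℝ) (hE₁ : ∀ᵐ x ∂π, eccOne π x ≤ ENNReal.ofReal c)
    (f : X → ℝ) (hf : MemL0 π f) :
    ∃ u : X → ℝ,
      (MemL0 π u ∧ ∀ x, u x - ∫ y, u y ∂(P x) = f x) ∧
      (∀ᵐ x ∂π, ENNReal.ofReal |u x| ≤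
        ENNReal.ofReal c * (∑' n : ℕ, tau (kpow P n)) * elip f) ∧
      ∀ v : X → ℝ, (MemL0 π v ∧ ∀ x, v x - ∫ y, v y ∂(P x) = f x) → v = u := by
  obtain ⟨x₀, hx₀⟩ := hE₁.exists
  have hπ : eccOne π x₀ ≠ ∞ := ne_top_of_le_ne_top ENNReal.ofReal_ne_top hx₀
  have hsum := tsum_elip_markovOp_kpow_ne_top hinv htau.ne hπ hm hcontr hf
  refine ⟨neumannSeries P f, ⟨memL0_neumannSeries hinv htau.ne hπ hf hsum,
    neumannSeries_sub_markovOp hinv htau.ne hπ hf hsum⟩, ?_, fun v ⟨hv, hveq⟩ =>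
    eq_neumannSeries_of_sub_markovOp hinv htau.ne hπ hcontr hf hsum hv hveq⟩
  filter_upwards [hE₁] with x hx
  exact (ofReal_abs_neumannSeries_le hinv htau.ne hπ hf x).trans (by gcongr)

/-- if `E₁(x) ≤ c` for `π`-almost all `x`, the unique Lipschitz solution of
Poisson's equation satisfies `|u(x)| ≤ c Λ ‖f‖_d` for `π`-almost all `x`. -/
theorem poisson_solution_Linfty_bound {X : Type*} [MeasurableSpace X] [MetricSpace X]
    [PolishSpace X] [BorelSpace X]
    (π : Measure X) [IsProbabilityMeasure π]
    (P : Kernel X X) [IsMarkovKernel P] (hinv : π.bind P = π)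
    (htau : tau P < ∞) (m : ℕ) (hm : 0 < m) (hcontr : tau (kpow P m) < 1)
    (p : ℝ) (hp : 1 ≤ p) (x₀ : X) (hE : ecc π p x₀ < ∞)
    (c : ℝ) (hc : 0 < c) (hE₁ : ∀ᵐ x ∂π, eccOne π x ≤ ENNReal.ofReal c)
    (f : X → ℝ) (hf : MemL0 π f) :
    ∃ u : X → ℝ,
      (MemL0 π u ∧ ∀ x, u x - ∫ y, u y ∂(P x) = f x) ∧
      (∀ᵐ x ∂π, ENNReal.ofReal |u x| ≤
        ENNReal.ofReal c * (∑' n : ℕ, tau (kpow P n)) * elip f) ∧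
      ∀ v : X → ℝ, (MemL0 π v ∧ ∀ x, v x - ∫ y, v y ∂(P x) = f x) → v = u :=
  poisson_solution_Linfty_bound_general π P hinv htau m hm hcontr c hE₁ f hf
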